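/- Suppose p_0·I > d/t where 0 < t < 1, α ∈ (0,1), d > 0, I > 0, and p_n = p_0·(1-α)^n + (d/I)·(1 - (1-α)^n). Then p_n·I ≤ d/t for every n ≥ ⌈(ln(d/t - d) - ln(p_0·I - d)) / ln(1-α)⌉. -/
import Mathlib


theorem stmt_3 (t α d I p₀ : ℝ) (ht0 : 0 < t) (ht1 : t < 1)
    (hα0 : 0 < α) (hα1 : α < 1) (hd : 0 < d) (hI : 0 < I)
    (hp0 : p₀ * I > d / t)
    (p : ℕ → ℝ)
    (hp : ∀ n, p n = p₀ * (1 - α) ^ n + (d / I) * (1 - (1 - α) ^ n)) :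
    ∀ n : ℕ, (n : ℤ) ≥ ⌈(Real.log (d / t - d) - Real.log (p₀ * I - d)) / Real.log (1 - α)⌉ →
      p n * I ≤ d / t := by
  intro n hn
  have hdt : d < d / t := by
    rw [lt_div_iff₀ ht0]; nlinarith
  have hB : 0 < d / t - d := by linarith
  have hA : 0 < p₀ * I - d := by linarith
  have h1α0 : 0 < 1 - α := by linarith
  have h1α1 : 1 - α < 1 := by linarith
  have hL : Real.log (1 - α) < 0 := Real.log_neg h1α0 h1α1
  -- from hn, (n:ℝ) ≥ the ratio
  have hn' : ((Real.log (d / t - d) - Real.log (p₀ * I - d)) / Real.log (1 - α)) ≤ (n : ℝ) := by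
    have := Int.ceil_le.mp hn
    exact_mod_cast this
  have hmul : (n : ℝ) * Real.log (1 - α) ≤ Real.log (d / t - d) - Real.log (p₀ * I - d) := by
    have := mul_le_mul_of_nonpos_right hn' (le_of_lt hL)
    calc (n : ℝ) * Real.log (1 - α) ≤ _ := this
      _ = Real.log (d / t - d) - Real.log (p₀ * I - d) :=
        div_mul_cancel₀ _ (ne_of_lt hL)
  have hpow : (1 - α) ^ n ≤ (d / t - d) / (p₀ * I - d) := by
    have hlog : Real.log ((1 - α) ^ n) ≤ Real.log ((d / t - d) / (p₀ * I - d)) := by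
      rw [Real.log_pow, Real.log_div (ne_of_gt hB) (ne_of_gt hA)]
      exact_mod_cast hmul
    have hppos : (0:ℝ) < (1 - α) ^ n := pow_pos h1α0 n
    exact (Real.log_le_log_iff hppos (div_pos hB hA)).mp hlog
  have key : (p₀ * I - d) * (1 - α) ^ n ≤ d / t - d := by
    rw [← le_div_iff₀' hA] at *
    linarith [hpow]
  rw [hp n]
  have hI' : d / I * I = d := div_mul_cancel₀ d (ne_of_gt hI)
  nlinarith [key]
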